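/- Let λ be a weak composition of n, h a Hessenberg function with h(i) < i for all i, and w ∈ S_n. Every Hessenberg inversion (k,ℓ) of R(w) is an inversion of w, i.e., inv_{h,λ}(w) ⊆ inv(w). -/

import Mathlib

open Matrix

attribute [local instance] Classical.propDecidable

noncomputable section

/-- Label of the box in row `i` (0-indexed from the top), column `j` (0-indexed) of the base
filling of the weak composition `lam`: columns filled left to right, each column bottom to top,
labels `1,…,n`. -/
def baseLabel (lam : List ℕ) (i j : ℕ) : ℕ :=
  (∑ i' ∈ Finset.range lam.length, min (lam.getD i' 0) j) +
    ((Finset.Ico i lam.length).filter (fun i' => j < lam.getD i' 0)).card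

def IsBox (lam : List ℕ) (i j : ℕ) : Prop :=
  i < lam.length ∧ j < lam.getD i 0

/-- The nilpotent matrix `X_λ = Σ E_{ℓ r}` over pairs where the box labeled `r` is directly right
of the box labeled `ℓ` in the base filling (labels are 1-indexed; matrix indices 0-indexed). -/
def Xlam (n : ℕ) (lam : List ℕ) : Matrix (Fin n) (Fin n) ℂ :=
  fun ℓ r => if (∃ i j, IsBox lam i (j+1) ∧ baseLabel lam i j = (ℓ : ℕ) + 1 ∧
      baseLabel lam i (j+1) = (r : ℕ) + 1) then 1 else 0

def IsFullFlag (n : ℕ) (V : ℕ → Submodule ℂ (Fin n → ℂ)) : Prop :=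
  V 0 = ⊥ ∧ (∀ i, V i ≤ V (i+1)) ∧ ∀ i, i ≤ n → Module.finrank ℂ (V i) = i

def InHess (n : ℕ) (X : Matrix (Fin n) (Fin n) ℂ) (h : ℕ → ℕ)
    (V : ℕ → Submodule ℂ (Fin n → ℂ)) : Prop :=
  ∀ i, i ≤ n → ∀ v ∈ V i, X.mulVec v ∈ V (h i)

/-- The flag `wE_•`, whose `k`-th space is spanned by `e_{w(1)},…,e_{w(k)}` (0-indexed). -/
def permFlag (n : ℕ) (w : Equiv.Perm (Fin n)) : ℕ → Submodule ℂ (Fin n → ℂ) :=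
  fun k => Submodule.span ℂ {v | ∃ j : Fin n, (j : ℕ) < k ∧ v = Pi.single (w j) (1 : ℂ)}

/-- The flag whose `k`-th space is spanned by the first `k` columns of `g`. -/
def matFlag (n : ℕ) (g : Matrix (Fin n) (Fin n) ℂ) : ℕ → Submodule ℂ (Fin n → ℂ) :=
  fun k => Submodule.span ℂ {c | ∃ j : Fin n, (j : ℕ) < k ∧ c = fun a => g a j}

def permMat (n : ℕ) (σ : Equiv.Perm (Fin n)) : Matrix (Fin n) (Fin n) ℂ :=
  fun a b => if σ b = a then 1 else 0

def invSet (n : ℕ) (w : Equiv.Perm (Fin n)) : Finset (Fin n × Fin n) :=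
  Finset.univ.filter (fun p => p.2 < p.1 ∧ w p.1 < w p.2)

def blen (n : ℕ) (w : Equiv.Perm (Fin n)) : ℕ := (invSet n w).card

/-- `v = s_i s_{i+1} ⋯ s_{n-1}` (0-indexed simple transpositions `swap j (j+1)`). -/
def vPerm (n : ℕ) (i : ℕ) : Equiv.Perm (Fin (n+1)) :=
  ((List.Ico i n).map (fun j : ℕ => Equiv.swap (Fin.ofNat (n+1) j) (Fin.ofNat (n+1) (j+1)))).prod

/-- `R(w)` is row-strict: the entry in the box labeled `m` of the base filling is `w⁻¹(m)`,
so entry `p` (0-indexed) occupies the box whose base label is `w(p)+1`. -/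
def RowStrictT (n : ℕ) (lam : List ℕ) (w : Equiv.Perm (Fin n)) : Prop :=
  ∀ i j, IsBox lam i (j+1) → ∀ p q : Fin n,
    (w p : ℕ) + 1 = baseLabel lam i j → (w q : ℕ) + 1 = baseLabel lam i (j+1) → p < q

def HStrictT (n : ℕ) (lam : List ℕ) (h : ℕ → ℕ) (w : Equiv.Perm (Fin n)) : Prop :=
  ∀ i j, IsBox lam i (j+1) → ∀ p q : Fin n,
    (w p : ℕ) + 1 = baseLabel lam i j → (w q : ℕ) + 1 = baseLabel lam i (j+1) →
      (p : ℕ) + 1 ≤ h ((q : ℕ) + 1)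

/-- `(k,ℓ)` is a Hessenberg inversion of `R(w)` (entries 0-indexed: values are index+1). -/
def HessInvT (n : ℕ) (lam : List ℕ) (h : ℕ → ℕ) (w : Equiv.Perm (Fin n)) (k ℓ : Fin n) : Prop :=
  ℓ < k ∧ ∃ ik jk il jl : ℕ, IsBox lam ik jk ∧ IsBox lam il jl ∧
    baseLabel lam ik jk = (w k : ℕ) + 1 ∧ baseLabel lam il jl = (w ℓ : ℕ) + 1 ∧
    (jk < jl ∨ (jk = jl ∧ il < ik)) ∧
    (∀ r : Fin n, IsBox lam il (jl + 1) → (w r : ℕ) + 1 = baseLabel lam il (jl + 1) →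
      (k : ℕ) + 1 ≤ h ((r : ℕ) + 1))

/-- Springer inversions: Hessenberg inversions for `h = (0,1,…,n-1)`, i.e. `h(i) = i - 1`. -/
def SpringerInvT (n : ℕ) (lam : List ℕ) (w : Equiv.Perm (Fin n)) (k ℓ : Fin n) : Prop :=
  HessInvT n lam (fun m => m - 1) w k ℓ

/-- The box labeled `b+1` is directly right of the box labeled `a+1` in the base filling. -/
def RightNbr (lam : List ℕ) (a b : ℕ) : Prop :=
  ∃ i j, IsBox lam i (j+1) ∧ baseLabel lam i j = a + 1 ∧ baseLabel lam i (j+1) = b + 1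

/-- The box labeled `a+1` is at the end of its row in the base filling. -/
def EndOfRow (lam : List ℕ) (a : ℕ) : Prop :=
  ∃ i j, IsBox lam i j ∧ ¬ IsBox lam i (j+1) ∧ baseLabel lam i j = a + 1

def IsUpperUnip (n : ℕ) (g : Matrix (Fin n) (Fin n) ℂ) : Prop :=
  (∀ i, g i i = 1) ∧ ∀ i j : Fin n, j < i → g i j = 0

/-- `U_i`: upper unipotent matrices whose off-diagonal entries are supported in row `i`. -/
def InUi (n : ℕ) (i : Fin n) (g : Matrix (Fin n) (Fin n) ℂ) : Prop :=
  IsUpperUnip n g ∧ ∀ a b : Fin n, a ≠ b → g a b ≠ 0 → a = i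

/-- `U_0`: upper unipotent matrices of `GL_n` embedded in `GL_{n+1}` (last column trivial). -/
def InU0 (n : ℕ) (g : Matrix (Fin (n+1)) (Fin (n+1)) ℂ) : Prop :=
  IsUpperUnip (n+1) g ∧ ∀ a : Fin (n+1), a ≠ Fin.last n → g a (Fin.last n) = 0

/-- The element of `B_k(w)` with coordinates `x`: it sends `e_{w(j)} = X_λ^m e_{w(ℓ)}` to
`e_{w(j)} + x ℓ • X_λ^m e_{w(k)}` for Springer inversions `(k,ℓ)`, fixing all other `e_{w(j)}`. -/
def BkMat (n : ℕ) (lam : List ℕ) (w : Equiv.Perm (Fin n)) (k : Fin n) (x : Fin n → ℂ) :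
    Matrix (Fin n) (Fin n) ℂ :=
  1 + ∑ ℓ : Fin n, if SpringerInvT n lam w k ℓ then
      x ℓ • (∑ m ∈ Finset.range n,
        (Xlam n lam) ^ m * Matrix.single (w k) (w ℓ) (1 : ℂ) * ((Xlam n lam)ᵀ) ^ m)
    else 0

/-- The product `g_n g_{n-1} ⋯ g_2` of elements `g_k ∈ B_k(w)` with coordinates `x k`. -/
def bigB (n : ℕ) (lam : List ℕ) (w : Equiv.Perm (Fin n)) (x : Fin n → Fin n → ℂ) :
    Matrix (Fin n) (Fin n) ℂ :=
  ((List.ofFn (fun k : Fin n => BkMat n lam w k (x k))).reverse).prod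

/- Abstract fillings `T : row → column → value` of the diagram of `lam`, values in `[1, n]`. -/

def RowStrictF (lam : List ℕ) (T : ℕ → ℕ → ℕ) : Prop :=
  ∀ i j, IsBox lam i (j+1) → T i j < T i (j+1)

def HStrictF (lam : List ℕ) (h : ℕ → ℕ) (T : ℕ → ℕ → ℕ) : Prop :=
  ∀ i j, IsBox lam i (j+1) → T i j ≤ h (T i (j+1))

def GoodFilling (lam : List ℕ) (T : ℕ → ℕ → ℕ) : Prop :=
  (∀ i j, IsBox lam i j → 1 ≤ T i j ∧ T i j ≤ lam.sum) ∧
  (∀ m, 1 ≤ m → m ≤ lam.sum → ∃ i j, IsBox lam i j ∧ T i j = m) ∧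
  (∀ i j i' j', IsBox lam i j → IsBox lam i' j' → T i j = T i' j' → i = i' ∧ j = j')

def HessInvF (lam : List ℕ) (h : ℕ → ℕ) (T : ℕ → ℕ → ℕ) (k ℓ : ℕ) : Prop :=
  ℓ < k ∧ ∃ ik jk il jl : ℕ, IsBox lam ik jk ∧ IsBox lam il jl ∧
    T ik jk = k ∧ T il jl = ℓ ∧
    (jk < jl ∨ (jk = jl ∧ il < ik)) ∧
    (IsBox lam il (jl + 1) → k ≤ h (T il (jl + 1)))

/-- `S` is obtained from `T` by sorting each column increasingly from top to bottom:
same column entries (as sets, entries being distinct), with columns of `S` increasing. -/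
def ColSortedOf (lam : List ℕ) (T S : ℕ → ℕ → ℕ) : Prop :=
  (∀ j m, (∃ i, IsBox lam i j ∧ T i j = m) ↔ (∃ i, IsBox lam i j ∧ S i j = m)) ∧
  (∀ i j, IsBox lam i j → IsBox lam (i+1) j → S i j < S (i+1) j)

def IsPartitionL (lam : List ℕ) : Prop :=
  ∀ i i', i ≤ i' → lam.getD i' 0 ≤ lam.getD i 0

def hessInvCount (lam : List ℕ) (h : ℕ → ℕ) (T : ℕ → ℕ → ℕ) : ℕ :=
  (((Finset.range (lam.sum + 1)) ×ˢ (Finset.range (lam.sum + 1))).filter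
    (fun p => HessInvF lam h T p.1 p.2)).card

def Hspace (n : ℕ) (h : ℕ → ℕ) : Submodule ℂ (Matrix (Fin n) (Fin n) ℂ) :=
  Submodule.span ℂ
    {A | ∃ i j : Fin n, (i : ℕ) + 1 ≤ h ((j : ℕ) + 1) ∧ A = Matrix.single i j (1 : ℂ)}

/-- Left-nested iterated bracket `[f (m), [f (m-1), [⋯ [f 1, f 0]]]]`. -/
def iterBr (n : ℕ) (f : ℕ → Matrix (Fin n) (Fin n) ℂ) : ℕ → Matrix (Fin n) (Fin n) ℂ
  | 0 => f 0
  | (m+1) => f (m+1) * iterBr n f m - iterBr n f m * f (m+1)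


/-!
In `R(w)` the entry `p` sits in the box with base label `w(p) + 1`, so it suffices that the base
filling increases along the order of condition (1). The label of box `(i, j)` is the number
`∑ min (λ_i', j)` of boxes in columns left of `j`, plus the number of boxes of column `j` in rows
`i` and below; so a box strictly left of, or in the same column and below, another box carries a
smaller base label.
-/

open Finset

lemma sum_min_succ (s : Finset ℕ) (f : ℕ → ℕ) (j : ℕ) :
    ∑ i ∈ s, min (f i) (j + 1) = ∑ i ∈ s, min (f i) j + #(s.filter fun i => j < f i) := by
  rw [card_filter, ← sum_add_distrib]
  refine sum_congr rfl fun i _ => ?_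
  split <;> omega

lemma baseLabel_le_sum_min_succ (lam : List ℕ) (i j : ℕ) :
    baseLabel lam i j ≤ ∑ i' ∈ range lam.length, min (lam.getD i' 0) (j + 1) := by
  rw [sum_min_succ, baseLabel]
  gcongr
  exact fun a ha => mem_range.mpr (mem_Ico.mp ha).2

lemma sum_min_lt_baseLabel {lam : List ℕ} {i j : ℕ} (hb : IsBox lam i j) :
    ∑ i' ∈ range lam.length, min (lam.getD i' 0) j < baseLabel lam i j := by
  have hmem : i ∈ (Ico i lam.length).filter (fun i' => j < lam.getD i' 0) :=
    mem_filter.mpr ⟨mem_Ico.mpr ⟨le_rfl, hb.1⟩, hb.2⟩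
  have := card_pos.mpr ⟨i, hmem⟩
  unfold baseLabel
  omega

lemma baseLabel_lt_of_lt_col (lam : List ℕ) {ik jk il jl : ℕ} (hb : IsBox lam il jl)
    (hj : jk < jl) : baseLabel lam ik jk < baseLabel lam il jl :=
  calc baseLabel lam ik jk
      ≤ ∑ i' ∈ range lam.length, min (lam.getD i' 0) (jk + 1) :=
        baseLabel_le_sum_min_succ lam ik jk
    _ ≤ ∑ i' ∈ range lam.length, min (lam.getD i' 0) jl :=
        sum_le_sum fun _ _ => min_le_min_left _ hj
    _ < baseLabel lam il jl := sum_min_lt_baseLabel hb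

lemma baseLabel_lt_of_lt_row {lam : List ℕ} {ik il j : ℕ} (hb : IsBox lam il j)
    (hi : il < ik) : baseLabel lam ik j < baseLabel lam il j := by
  have hsub : (Ico ik lam.length).filter (fun i' => j < lam.getD i' 0)
      ⊂ (Ico il lam.length).filter (fun i' => j < lam.getD i' 0) := by
    refine (ssubset_iff_of_subset (filter_subset_filter _ (Ico_subset_Ico hi.le le_rfl))).mpr
      ⟨il, mem_filter.mpr ⟨mem_Ico.mpr ⟨le_rfl, hb.1⟩, hb.2⟩, fun h => ?_⟩
    exact absurd (mem_Ico.mp (mem_filter.mp h).1).1 (not_le.mpr hi)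
  have := card_lt_card hsub
  unfold baseLabel
  omega

theorem stmt7_general (n : ℕ) (lam : List ℕ) (h : ℕ → ℕ)
    (w : Equiv.Perm (Fin n)) (k ℓ : Fin n)
    (hkl : HessInvT n lam h w k ℓ) :
    ℓ < k ∧ w k < w ℓ := by
  obtain ⟨hlk, ik, jk, il, jl, -, hbl, hlabk, hlabl, hpos, -⟩ := hkl
  have key : baseLabel lam ik jk < baseLabel lam il jl := by
    rcases hpos with hj | ⟨rfl, hi⟩
    · exact baseLabel_lt_of_lt_col lam hbl hj
    · exact baseLabel_lt_of_lt_row hbl hi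
  rw [hlabk, hlabl] at key
  exact ⟨hlk, Fin.lt_def.mpr (by omega)⟩

/-- every Hessenberg inversion of `R(w)` is an inversion of `w`. -/
theorem stmt7 (n : ℕ) (lam : List ℕ) (hn : lam.sum = n) (h : ℕ → ℕ)
    (hmono : ∀ i, 1 ≤ i → i < n → h i ≤ h (i+1))
    (hlt : ∀ i, 1 ≤ i → i ≤ n → h i < i)
    (w : Equiv.Perm (Fin n)) (k ℓ : Fin n)
    (hkl : HessInvT n lam h w k ℓ) :
    ℓ < k ∧ w k < w ℓ :=
  stmt7_general n lam h w k ℓ hkl
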